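/- There exists a first-order sentence φ in the first-order language with a single binary relation symbol ≤ (and equality) such that for every finite distributive lattice D satisfying the Two-cover Property (viewed as a structure for this language via its lattice order): D satisfies φ if and only if D satisfies the Decomposable Cyclic Elements Property. -/

import Mathlib

open FirstOrder

section LatticeDefs

variable {α : Type*} [Lattice α] [OrderBot α]

/-- An element of a lattice with least element `⊥` is *join-irreducible* if it is not the
least element and `x = y ⊔ z` implies `x = y` or `x = z`. -/
def JoinIrred (x : α) : Prop :=
  x ≠ ⊥ ∧ ∀ y z : α, x = y ⊔ z → x = y ∨ x = z

variable (α) in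
/-- The set of maximal elements of the poset of join-irreducible elements. -/
def maxJI : Set α :=
  {a | JoinIrred a ∧ ∀ b : α, JoinIrred b → a ≤ b → a = b}

/-- `c` is covered by `a` in the poset of join-irreducible elements. -/
def JCovBy (c a : α) : Prop :=
  JoinIrred c ∧ JoinIrred a ∧ c < a ∧ ∀ d : α, JoinIrred d → c < d → d < a → False

variable (α) in
/-- The *Two-cover Property*: every join-irreducible element has at most two covers in the
poset of join-irreducible elements. -/
def TwoCoverProperty : Prop :=
  ∀ x y z w : α, JCovBy x y → JCovBy x z → JCovBy x w → y = z ∨ y = w ∨ z = w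

variable (α) in
/-- The *Bipartite Maximal Elements Property*: the set of maximal join-irreducible elements
is the disjoint union of two nonempty subsets such that no two distinct elements of the same
subset have a common lower cover in the poset of join-irreducible elements. -/
def BipartiteMaxElements : Prop :=
  ∃ A B : Set α, A.Nonempty ∧ B.Nonempty ∧ Disjoint A B ∧ A ∪ B = maxJI α ∧
    (∀ a ∈ A, ∀ b ∈ A, a ≠ b → ¬∃ c : α, JCovBy c a ∧ JCovBy c b) ∧
    (∀ a ∈ B, ∀ b ∈ B, a ≠ b → ¬∃ c : α, JCovBy c a ∧ JCovBy c b)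

/-- A *cyclic element*: the join of pairwise distinct maximal join-irreducible elements
`a 0, …, a (n-1)` (`n ≥ 3`) such that for `i < j`, some join-irreducible element lies below
both `a i` and `a j` if and only if `j = i + 1` or `(i, j) = (0, n - 1)`. -/
def IsCyclicElem (x : α) : Prop :=
  ∃ n : ℕ, 3 ≤ n ∧ ∃ a : Fin n → α, Function.Injective a ∧ (∀ i, a i ∈ maxJI α) ∧
    x = Finset.univ.sup a ∧
    ∀ i j : Fin n, i < j →
      ((∃ c : α, JoinIrred c ∧ c ≤ a i ∧ c ≤ a j) ↔
        ((j : ℕ) = (i : ℕ) + 1 ∨ ((i : ℕ) = 0 ∧ (j : ℕ) = n - 1)))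

/-- A *V-set* of `x`: a two-element subset of `maxJI α ∩ ↓x` whose two elements have a
common join-irreducible lower bound. -/
def IsVSet (x : α) (S : Set α) : Prop :=
  ∃ a₀ a₁ : α, a₀ ≠ a₁ ∧ S = {a₀, a₁} ∧ a₀ ∈ maxJI α ∧ a₁ ∈ maxJI α ∧ a₀ ≤ x ∧ a₁ ≤ x ∧
    ∃ c : α, JoinIrred c ∧ c ≤ a₀ ∧ c ≤ a₁

/-- A *W-set* of `x`: a four-element subset `{a 0, a 1, a 2, a 3}` of `maxJI α ∩ ↓x` such
that for `i < j`, some join-irreducible element lies below both `a i` and `a j` if and only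
if `j = i + 1`. -/
def IsWSet (x : α) (S : Set α) : Prop :=
  ∃ a : Fin 4 → α, Function.Injective a ∧ S = Set.range a ∧
    (∀ i, a i ∈ maxJI α ∧ a i ≤ x) ∧
    ∀ i j : Fin 4, i < j →
      ((∃ c : α, JoinIrred c ∧ c ≤ a i ∧ c ≤ a j) ↔ (j : ℕ) = (i : ℕ) + 1)

/-- A *VW-element*: a nonzero element `x` which is the join of `maxJI α ∩ ↓x`, such that
each element of `maxJI α ∩ ↓x` either belongs to a unique V-set of `x` and to no W-set of
`x`, or belongs to a unique W-set of `x` and to no V-set of `x`. -/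
def IsVWElem (x : α) : Prop :=
  x ≠ ⊥ ∧ IsLUB (maxJI α ∩ Set.Iic x) x ∧
    ∀ y ∈ maxJI α ∩ Set.Iic x,
      ((∃! S : Set α, IsVSet x S ∧ y ∈ S) ∧ ¬∃ S : Set α, IsWSet x S ∧ y ∈ S) ∨
      ((∃! S : Set α, IsWSet x S ∧ y ∈ S) ∧ ¬∃ S : Set α, IsVSet x S ∧ y ∈ S)

variable (α) in
/-- The *Decomposable Cyclic Elements Property*: each cyclic element `x` is the join of two
VW-elements `y`, `z` with `maxJI α ∩ ↓y ∩ ↓z = ∅`. -/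
def DecomposableCyclicElements : Prop :=
  ∀ x : α, IsCyclicElem x →
    ∃ y z : α, IsVWElem y ∧ IsVWElem z ∧ x = y ⊔ z ∧
      maxJI α ∩ Set.Iic y ∩ Set.Iic z = ∅

end LatticeDefs

/-!
Write `M x` for the maximal join-irreducibles below `x`, and join two of them by an edge when
some join-irreducible lies below both (`commonJIGraph`). The V- and W-sets of the definitions
are then edges and induced paths of length three, and `y` is a VW-element exactly when
`y ≠ ⊥`, `y = ⋁ M y` and every vertex of `M y` has exactly one neighbour in `M y`: a vertex in
a W-set always lies in a V-set, and the middle of a W-set has two neighbours. Likewise `x` is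
cyclic exactly when `x = ⋁ M x` and the graph induced on `M x` is a cycle, which for a finite
graph means nonempty, 2-regular and connected (follow a non-backtracking walk until its first
repetition). Connectivity quantifies over subsets of `M x`, but in a distributive lattice a
maximal join-irreducible below a finite join of maximal join-irreducibles is one of them, so
the subsets of `M x` are exactly the sets `M x ∩ Set.Iic u`, and it suffices to quantify over
elements `u`. Every remaining condition is first-order in `≤`.
-/

namespace SimpleGraph

variable {V : Type*} {G : SimpleGraph V} {S : Set V}

lemma neighborSet_inter_eq_pair {a b c : V} (h2 : (G.neighborSet a ∩ S).ncard = 2)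
    (hb : b ∈ G.neighborSet a ∩ S) (hc : c ∈ G.neighborSet a ∩ S) (hbc : b ≠ c) :
    G.neighborSet a ∩ S = {b, c} :=
  (Set.eq_of_subset_of_ncard_le (Set.insert_subset hb (Set.singleton_subset_iff.mpr hc))
    (by rw [h2, Set.ncard_pair hbc]) (Set.finite_of_ncard_ne_zero (by omega))).symm

lemma cycleGraph_adj_iff_of_lt {n : ℕ} {i j : Fin n} (h : i < j) :
    (cycleGraph n).Adj i j ↔ (j : ℕ) = i + 1 ∨ ((i : ℕ) = 0 ∧ (j : ℕ) = n - 1) := by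
  rw [cycleGraph_adj', Fin.coe_sub_iff_lt.mpr h, Fin.coe_sub_iff_le.mpr h.le]
  omega

lemma adj_iff_of_forall_lt {ι : Type*} [LinearOrder ι] {H : SimpleGraph ι} {f : ι → V}
    (h : ∀ i j, i < j → (G.Adj (f i) (f j) ↔ H.Adj i j)) (i j : ι) :
    G.Adj (f i) (f j) ↔ H.Adj i j := by
  rcases lt_trichotomy i j with hij | rfl | hij
  · exact h i j hij
  · simp
  · rw [G.adj_comm, H.adj_comm]
    exact h j i hij

lemma ncard_neighborSet_cycleGraph {m : ℕ} (i : Fin (m + 3)) :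
    ((cycleGraph (m + 3)).neighborSet i).ncard = 2 := by
  rw [cycleGraph_neighborSet, Set.ncard_pair]
  simp only [ne_eq, sub_eq_iff_eq_add, add_assoc i, left_eq_add]
  exact ne_of_beq_false rfl

lemma neighborSet_inter_range_eq_image {W : Type*} {H : SimpleGraph W} (f : H ↪g G) (w : W) :
    G.neighborSet (f w) ∩ Set.range f = f '' H.neighborSet w := by
  ext d
  constructor
  · rintro ⟨hadj, u, rfl⟩
    exact ⟨u, f.map_adj_iff.mp hadj, rfl⟩
  · rintro ⟨u, hu, rfl⟩
    exact ⟨f.map_adj_iff.mpr hu, u, rfl⟩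

lemma ncard_neighborSet_inter_range {m : ℕ} (f : cycleGraph (m + 3) ↪g G) (i : Fin (m + 3)) :
    (G.neighborSet (f i) ∩ Set.range f).ncard = 2 := by
  rw [neighborSet_inter_range_eq_image, Set.ncard_image_of_injective _ f.injective,
    ncard_neighborSet_cycleGraph]

open Fin.NatCast in
lemma range_subset_of_closed_under_adj {m : ℕ} (f : cycleGraph (m + 3) ↪g G) {T : Set V}
    (hT : T ⊆ Set.range f) (hne : T.Nonempty)
    (hcl : ∀ a ∈ T, G.neighborSet a ∩ Set.range f ⊆ T) : Set.range f ⊆ T := by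
  obtain ⟨_, ht⟩ := hne
  obtain ⟨i, rfl⟩ := hT ht
  have hstep : ∀ k : ℕ, f (i + (k : Fin (m + 3))) ∈ T := by
    intro k
    induction k with
    | zero => simpa using ht
    | succ k ih =>
      refine hcl _ ih ⟨f.map_adj_iff.mpr ?_, _, rfl⟩
      rw [cycleGraph_adj, Nat.cast_succ, ← add_assoc, add_sub_cancel_left]
      exact Or.inr rfl
  rintro _ ⟨j, rfl⟩
  simpa using hstep (j - i : Fin (m + 3))

lemma adj_iff_of_neighborSet_eq {m : ℕ} {f : Fin (m + 3) → V} (hf : Function.Injective f)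
    (h : ∀ i, G.neighborSet (f i) ∩ Set.range f = {f (i - 1), f (i + 1)}) (i j : Fin (m + 3)) :
    G.Adj (f i) (f j) ↔ (cycleGraph (m + 3)).Adj i j := by
  have := Set.ext_iff.mp (h i) (f j)
  simp only [Set.mem_inter_iff, mem_neighborSet, Set.mem_range_self, and_true,
    Set.mem_insert_iff, Set.mem_singleton_iff, hf.eq_iff] at this
  rw [this, ← mem_neighborSet, cycleGraph_neighborSet]
  rfl

section NonBacktracking

variable {s : ℕ → V}

lemma adj_of_neighborSet_inter_eq (hnbr : ∀ k, G.neighborSet (s (k + 1)) ∩ S = {s k, s (k + 2)})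
    (k : ℕ) : G.Adj (s k) (s (k + 1)) :=
  G.adj_symm ((hnbr k).symm ▸ Set.mem_insert _ _ : s k ∈ G.neighborSet (s (k + 1)) ∩ S).1

lemma seq_add_two_eq_of_eq (hnbr : ∀ k, G.neighborSet (s (k + 1)) ∩ S = {s k, s (k + 2)})
    (hne : ∀ k, s (k + 2) ≠ s k) {a b : ℕ} (h₀ : s a = s b) (h₁ : s (a + 1) = s (b + 1)) :
    s (a + 2) = s (b + 2) := by
  have h := (hnbr a).symm.trans (h₁ ▸ hnbr b)
  rw [h₀, Set.pair_eq_pair_iff] at h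
  rcases h with ⟨-, h⟩ | ⟨h, -⟩
  · exact h
  · exact absurd h.symm (hne b)

lemma periodic_of_eq_zero_of_eq_one (hnbr : ∀ k, G.neighborSet (s (k + 1)) ∩ S = {s k, s (k + 2)})
    (hne : ∀ k, s (k + 2) ≠ s k) {n : ℕ} (h₀ : s n = s 0) (h₁ : s (n + 1) = s 1) :
    Function.Periodic s n := by
  suffices h : ∀ k, s (k + n) = s k ∧ s (k + 1 + n) = s (k + 1) from fun k => (h k).1
  intro k
  induction k with
  | zero => simpa [add_comm] using ⟨h₀, h₁⟩
  | succ k ih =>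
    refine ⟨ih.2, ?_⟩
    have := seq_add_two_eq_of_eq hnbr hne (a := k + n) (b := k) ih.1
      (by rw [Nat.add_right_comm]; exact ih.2)
    rwa [Nat.add_right_comm k n 2] at this

lemma first_repeat_eq_zero (hnbr : ∀ k, G.neighborSet (s (k + 1)) ∩ S = {s k, s (k + 2)})
    (hne : ∀ k, s (k + 2) ≠ s k) {n j : ℕ} (hj : j < n) (hrep : s n = s j)
    (hinj : ∀ p q, p < q → q < n → s p ≠ s q) : j = 0 := by
  by_contra hj0
  have hmem : s (n - 1) ∈ G.neighborSet (s j) ∩ S := by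
    rw [← hrep, show n = n - 1 + 1 by omega, hnbr]
    exact Set.mem_insert _ _
  rw [show j = j - 1 + 1 by omega, hnbr, show j - 1 + 1 + 1 = j + 1 by omega] at hmem
  rcases hmem with h | h
  · exact hinj (j - 1) (n - 1) (by omega) (by omega) h.symm
  · rcases (by omega : j + 1 < n - 1 ∨ j + 1 = n - 1 ∨ j + 1 = n) with hlt | heq | heq
    · exact hinj (j + 1) (n - 1) hlt (by omega) h.symm
    · exact hne j (by rw [show j + 2 = n by omega, hrep])
    · have hadj := adj_of_neighborSet_inter_eq hnbr (n - 1)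
      rw [show n - 1 + 1 = n by omega, h, heq] at hadj
      exact G.irrefl hadj

lemma exists_periodic_injOn (hfin : S.Finite) (hS : ∀ k, s k ∈ S)
    (hnbr : ∀ k, G.neighborSet (s (k + 1)) ∩ S = {s k, s (k + 2)}) (hne : ∀ k, s (k + 2) ≠ s k) :
    ∃ m, Function.Periodic s (m + 3) ∧ ∀ p q, p < q → q < m + 3 → s p ≠ s q := by
  classical
  have hrep : ∃ n, ∃ j < n, s n = s j := by
    obtain ⟨i, j, hij, h⟩ := hfin.exists_lt_map_eq_of_forall_mem hS
    exact ⟨j, i, hij, h.symm⟩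
  obtain ⟨n, ⟨j, hjn, hsj⟩, hinj⟩ :
      ∃ n, (∃ j < n, s n = s j) ∧ ∀ p q, p < q → q < n → s p ≠ s q :=
    ⟨Nat.find hrep, Nat.find_spec hrep, fun p q hpq hq h => Nat.find_min hrep hq ⟨p, hpq, h.symm⟩⟩
  obtain rfl := first_repeat_eq_zero hnbr hne hjn hsj hinj
  have hadj := adj_of_neighborSet_inter_eq hnbr
  obtain ⟨m, rfl⟩ : ∃ m, n = m + 3 := by
    refine ⟨n - 3, ?_⟩
    rcases (by omega : n = 1 ∨ n = 2 ∨ 3 ≤ n) with rfl | rfl | h3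
    · exact absurd (hsj ▸ hadj 0) G.irrefl
    · exact absurd hsj (hne 0)
    · omega
  have h₁ : s (m + 3 + 1) = s 1 := by
    have hmem : s 1 ∈ G.neighborSet (s (m + 2 + 1)) ∩ S := ⟨hsj ▸ hadj 0, hS 1⟩
    rcases hnbr (m + 2) ▸ hmem with h | h
    · exact absurd h (hinj 1 (m + 2) (by omega) (by omega))
    · exact h.symm
  exact ⟨m, periodic_of_eq_zero_of_eq_one hnbr hne hsj h₁, hinj⟩

lemma neighborSet_inter_eq_of_periodic {m : ℕ} (hper : Function.Periodic s (m + 3))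
    (hnbr : ∀ k, G.neighborSet (s (k + 1)) ∩ S = {s k, s (k + 2)}) (i : Fin (m + 3)) :
    G.neighborSet (s i) ∩ S = {s ↑(i - 1), s ↑(i + 1)} := by
  have hsucc : s ↑(i + 1) = s (i + 1) := by rw [Fin.val_add, Fin.val_one, hper.map_mod_nat]
  have hpred : s ↑(i - 1) = s (i + (m + 2)) := by
    rw [Fin.val_sub, Fin.val_one, hper.map_mod_nat, Nat.add_comm]
    rfl
  rw [hsucc, hpred, ← hper i, ← hper (i + 1)]
  have h := hnbr (i + (m + 2))
  rwa [show (i : ℕ) + (m + 2) + 1 = i + (m + 3) by omega,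
    show (i : ℕ) + (m + 2) + 2 = i + 1 + (m + 3) by omega] at h

end NonBacktracking

open Classical in
noncomputable def otherNeighbor (G : SimpleGraph V) (S : Set V) (p q : V) : V :=
  if h : ∃ d ∈ G.neighborSet q ∩ S, d ≠ p then h.choose else q

lemma otherNeighbor_spec {p q : V} (h : (G.neighborSet q ∩ S).ncard = 2) :
    otherNeighbor G S p q ∈ G.neighborSet q ∩ S ∧ otherNeighbor G S p q ≠ p := by
  have hex : ∃ d ∈ G.neighborSet q ∩ S, d ≠ p := by
    obtain ⟨b, c, hbc, hpair⟩ := Set.ncard_eq_two.mp h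
    by_cases hb : b = p
    · exact ⟨c, hpair ▸ Set.mem_insert_of_mem _ rfl, hb ▸ hbc.symm⟩
    · exact ⟨b, hpair ▸ Set.mem_insert _ _, hb⟩
  rw [otherNeighbor, dif_pos hex]
  exact hex.choose_spec

noncomputable def nonBacktrackingSeq (G : SimpleGraph V) (S : Set V) (a b : V) : ℕ → V
  | 0 => a
  | 1 => b
  | k + 2 => otherNeighbor G S (nonBacktrackingSeq G S a b k) (nonBacktrackingSeq G S a b (k + 1))

lemma exists_nonBacktrackingSeq {a : V} (ha : a ∈ S)
    (hreg : ∀ a ∈ S, (G.neighborSet a ∩ S).ncard = 2) :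
    ∃ s : ℕ → V, (∀ k, s k ∈ S) ∧ (∀ k, G.neighborSet (s (k + 1)) ∩ S = {s k, s (k + 2)}) ∧
      ∀ k, s (k + 2) ≠ s k := by
  obtain ⟨b, hb⟩ : (G.neighborSet a ∩ S).Nonempty :=
    Set.nonempty_of_ncard_ne_zero (by rw [hreg a ha]; omega)
  set s := nonBacktrackingSeq G S a b
  have hstep : ∀ k, s (k + 1) ∈ G.neighborSet (s k) ∩ S →
      s (k + 2) ∈ G.neighborSet (s (k + 1)) ∩ S ∧ s (k + 2) ≠ s k :=
    fun k hk => otherNeighbor_spec (hreg _ hk.2)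
  have hnext : ∀ k, s (k + 1) ∈ G.neighborSet (s k) ∩ S := by
    intro k
    induction k with
    | zero => exact hb
    | succ k ih => exact (hstep k ih).1
  have hS : ∀ k, s k ∈ S
    | 0 => ha
    | k + 1 => (hnext k).2
  refine ⟨s, hS, fun k => ?_, fun k => (hstep k (hnext k)).2⟩
  exact neighborSet_inter_eq_pair (hreg _ (hS (k + 1))) ⟨G.adj_symm (hnext k).1, hS k⟩
    (hstep k (hnext k)).1 (hstep k (hnext k)).2.symm

lemma exists_cycleGraph_embedding (hfin : S.Finite) (hS : S.Nonempty)
    (hreg : ∀ a ∈ S, (G.neighborSet a ∩ S).ncard = 2)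
    (hconn : ∀ T ⊆ S, T.Nonempty → (∀ a ∈ T, G.neighborSet a ∩ S ⊆ T) → T = S) :
    ∃ m, ∃ f : cycleGraph (m + 3) ↪g G, Set.range f = S := by
  obtain ⟨s, hsS, hnbr, hne⟩ := exists_nonBacktrackingSeq hS.some_mem hreg
  obtain ⟨m, hper, hinj⟩ := exists_periodic_injOn hfin hsS hnbr hne
  let f : Fin (m + 3) → V := fun i => s i
  have hf : Function.Injective f := fun i j h => by
    by_contra hij
    rcases lt_or_gt_of_ne (Fin.val_ne_of_ne hij) with hlt | hlt
    · exact hinj _ _ hlt j.isLt h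
    · exact hinj _ _ hlt i.isLt h.symm
  have hmod : ∀ k, s k = f ⟨k % (m + 3), Nat.mod_lt _ (by omega)⟩ :=
    fun k => (hper.map_mod_nat k).symm
  have hrange : Set.range f = Set.range s :=
    Set.Subset.antisymm (Set.range_subset_iff.mpr fun i => ⟨i, rfl⟩)
      (Set.range_subset_iff.mpr fun k => ⟨_, (hmod k).symm⟩)
  have hnbr' := neighborSet_inter_eq_of_periodic hper hnbr
  have hrangeS : Set.range s = S := by
    refine hconn _ (Set.range_subset_iff.mpr hsS) ⟨s 0, 0, rfl⟩ ?_
    rintro _ ⟨k, rfl⟩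
    rw [hmod k, hnbr', ← hrange]
    exact Set.insert_subset (Set.mem_range_self _)
      (Set.singleton_subset_iff.mpr (Set.mem_range_self _))
  have hnbrf : ∀ i, G.neighborSet (f i) ∩ Set.range f = {f (i - 1), f (i + 1)} := fun i => by
    rw [hrange, hrangeS]; exact hnbr' i
  exact ⟨m, { toFun := f, inj' := hf, map_rel_iff' := adj_iff_of_neighborSet_eq hf hnbrf _ _ },
    hrange.trans hrangeS⟩

theorem exists_cycleGraph_embedding_iff (hfin : S.Finite) :
    (∃ m, ∃ f : cycleGraph (m + 3) ↪g G, Set.range f = S) ↔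
      S.Nonempty ∧ (∀ a ∈ S, (G.neighborSet a ∩ S).ncard = 2) ∧
        ∀ T ⊆ S, T.Nonempty → (∀ a ∈ T, G.neighborSet a ∩ S ⊆ T) → T = S := by
  constructor
  · rintro ⟨m, f, rfl⟩
    refine ⟨Set.range_nonempty f, ?_, fun T hT hne hcl =>
      hT.antisymm (range_subset_of_closed_under_adj f hT hne hcl)⟩
    rintro _ ⟨i, rfl⟩
    exact ncard_neighborSet_inter_range f i
  · rintro ⟨hne, hreg, hconn⟩
    exact exists_cycleGraph_embedding hfin hne hreg hconn

end SimpleGraph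

section CommonJIGraph

variable {α : Type*} [Lattice α] [OrderBot α]

variable (α) in
def commonJIGraph : SimpleGraph α where
  Adj a b := a ≠ b ∧ ∃ c, JoinIrred c ∧ c ≤ a ∧ c ≤ b
  symm := ⟨fun _ _ h => ⟨h.1.symm, h.2.imp fun _ hc => ⟨hc.1, hc.2.2, hc.2.1⟩⟩⟩
  loopless := ⟨fun _ h => h.1 rfl⟩

lemma joinIrred_iff_supIrred {x : α} : JoinIrred x ↔ SupIrred x := by
  simp only [JoinIrred, SupIrred, isMin_iff_eq_bot, ne_eq, @eq_comm _ x]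

lemma commonJIGraph_adj_iff {a b : α} (hab : a ≠ b) :
    (commonJIGraph α).Adj a b ↔ ∃ c, JoinIrred c ∧ c ≤ a ∧ c ≤ b :=
  and_iff_right hab

lemma isVSet_and_mem_iff {y a : α} {S : Set α} (ha : a ∈ maxJI α ∩ Set.Iic y) :
    IsVSet y S ∧ a ∈ S ↔
      ∃ b ∈ (commonJIGraph α).neighborSet a ∩ (maxJI α ∩ Set.Iic y), S = {a, b} := by
  constructor
  · rintro ⟨⟨a₀, a₁, hne, rfl, h₀, h₁, hy₀, hy₁, c, hc, hca₀, hca₁⟩, ha'⟩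
    rcases ha' with rfl | rfl
    · exact ⟨a₁, ⟨⟨hne, c, hc, hca₀, hca₁⟩, h₁, hy₁⟩, rfl⟩
    · exact ⟨a₀, ⟨⟨hne.symm, c, hc, hca₁, hca₀⟩, h₀, hy₀⟩, Set.pair_comm _ _⟩
  · rintro ⟨b, ⟨⟨hne, hadj⟩, hb, hby⟩, rfl⟩
    exact ⟨⟨a, b, hne, rfl, ha.1, hb, ha.2, hby, hadj⟩, Set.mem_insert _ _⟩

lemma existsUnique_isVSet_iff {y a : α} (ha : a ∈ maxJI α ∩ Set.Iic y) :
    (∃! S, IsVSet y S ∧ a ∈ S) ↔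
      ((commonJIGraph α).neighborSet a ∩ (maxJI α ∩ Set.Iic y)).ncard = 1 := by
  simp_rw [isVSet_and_mem_iff ha, Set.ncard_eq_one]
  constructor
  · rintro ⟨_, ⟨b, hb, rfl⟩, huniq⟩
    refine ⟨b, Set.eq_singleton_iff_unique_mem.mpr ⟨hb, fun d hd => ?_⟩⟩
    rcases Set.pair_eq_pair_iff.mp (huniq _ ⟨d, hd, rfl⟩) with ⟨-, h⟩ | ⟨-, h⟩
    · exact h
    · exact absurd h.symm ((commonJIGraph α).ne_of_adj hd.1)
  · rintro ⟨b, hb⟩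
    refine ⟨{a, b}, ⟨b, hb ▸ rfl, rfl⟩, ?_⟩
    rintro _ ⟨d, hd, rfl⟩
    rw [hb] at hd
    rw [hd]

lemma IsWSet.exists_path {y : α} {S : Set α} (hS : IsWSet y S) :
    ∃ p : Fin 4 → α, Function.Injective p ∧ S = Set.range p ∧
      (∀ i, p i ∈ maxJI α ∩ Set.Iic y) ∧
      ∀ i : Fin 3, (commonJIGraph α).Adj (p i.castSucc) (p i.succ) := by
  obtain ⟨p, hp, rfl, hmem, hadj⟩ := hS
  exact ⟨p, hp, rfl, hmem, fun i =>
    ⟨hp.ne Fin.castSucc_lt_succ.ne, (hadj _ _ Fin.castSucc_lt_succ).mpr rfl⟩⟩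

lemma IsWSet.neighborSet_inter_nonempty {y a : α} {S : Set α} (hS : IsWSet y S) (ha : a ∈ S) :
    ((commonJIGraph α).neighborSet a ∩ (maxJI α ∩ Set.Iic y)).Nonempty := by
  obtain ⟨p, -, rfl, hmem, hadj⟩ := hS.exists_path
  obtain ⟨i, rfl⟩ := ha
  fin_cases i
  exacts [⟨p 1, hadj 0, hmem 1⟩, ⟨p 0, (hadj 0).symm, hmem 0⟩, ⟨p 3, hadj 2, hmem 3⟩,
    ⟨p 2, (hadj 2).symm, hmem 2⟩]

lemma IsWSet.exists_ncard_ne_one {y : α} {S : Set α} (hS : IsWSet y S) :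
    ∃ a ∈ maxJI α ∩ Set.Iic y,
      ((commonJIGraph α).neighborSet a ∩ (maxJI α ∩ Set.Iic y)).ncard ≠ 1 := by
  obtain ⟨p, hp, -, hmem, hadj⟩ := hS.exists_path
  refine ⟨p 1, hmem 1, fun h => ?_⟩
  obtain ⟨b, hb⟩ := Set.ncard_eq_one.mp h
  have h₀ : p 0 ∈ ({b} : Set α) := hb ▸ ⟨(hadj 0).symm, hmem 0⟩
  have h₂ : p 2 ∈ ({b} : Set α) := hb ▸ ⟨hadj 1, hmem 2⟩
  exact hp.ne (by decide : (0 : Fin 4) ≠ 2) (h₀.trans h₂.symm)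

theorem isVWElem_iff {y : α} :
    IsVWElem y ↔ y ≠ ⊥ ∧ IsLUB (maxJI α ∩ Set.Iic y) y ∧ ∀ a ∈ maxJI α ∩ Set.Iic y,
      ((commonJIGraph α).neighborSet a ∩ (maxJI α ∩ Set.Iic y)).ncard = 1 := by
  constructor
  · rintro ⟨hy, hlub, hvw⟩
    refine ⟨hy, hlub, fun a ha => (existsUnique_isVSet_iff ha).mp ?_⟩
    rcases hvw a ha with ⟨h, -⟩ | ⟨⟨S, ⟨hS, haS⟩, -⟩, hnoV⟩
    · exact h
    · obtain ⟨b, hb⟩ := hS.neighborSet_inter_nonempty haS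
      exact absurd ⟨{a, b}, (isVSet_and_mem_iff ha).mpr ⟨b, hb, rfl⟩⟩ hnoV
  · rintro ⟨hy, hlub, hmatch⟩
    refine ⟨hy, hlub, fun a ha => Or.inl ⟨(existsUnique_isVSet_iff ha).mpr (hmatch a ha), ?_⟩⟩
    rintro ⟨S, hS, -⟩
    obtain ⟨b, hb, hne⟩ := hS.exists_ncard_ne_one
    exact hne (hmatch b hb)

end CommonJIGraph

section Distrib

variable {α : Type*} [DistribLattice α] [OrderBot α]

lemma exists_eq_of_maxJI_le_finset_sup {ι : Type*} {s : Finset ι} {f : ι → α} {a : α}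
    (ha : a ∈ maxJI α) (hf : ∀ i ∈ s, f i ∈ maxJI α) (h : a ≤ s.sup f) : ∃ i ∈ s, a = f i := by
  obtain ⟨i, hi, hai⟩ :=
    (supPrime_iff_supIrred.mpr (joinIrred_iff_supIrred.mp ha.1)).le_finset_sup.mp h
  exact ⟨i, hi, ha.2 _ (hf i hi).1 hai⟩

lemma maxJI_inter_Iic_finset_sup {s : Finset α} (hs : ↑s ⊆ maxJI α) :
    maxJI α ∩ Set.Iic (s.sup id) = s := by
  ext a
  constructor
  · rintro ⟨ha, has⟩
    obtain ⟨b, hb, rfl⟩ := exists_eq_of_maxJI_le_finset_sup ha (fun b hb => hs hb) has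
    exact hb
  · exact fun ha => ⟨hs ha, Finset.le_sup (f := id) ha⟩

lemma forall_closed_subset_iff_forall_le (G : SimpleGraph α) {S : Set α} (hS : S ⊆ maxJI α)
    (hfin : S.Finite) :
    (∀ T ⊆ S, T.Nonempty → (∀ a ∈ T, G.neighborSet a ∩ S ⊆ T) → T = S) ↔
      ∀ u, (∃ a ∈ S, a ≤ u) → (∀ a ∈ S, a ≤ u → ∀ b ∈ S, G.Adj a b → b ≤ u) →
        u ∈ upperBounds S := by
  constructor
  · intro h u hne hcl a ha
    have hT := h (S ∩ Set.Iic u) Set.inter_subset_left hne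
      fun b hb c hc => ⟨hc.2, hcl b hb.1 hb.2 c hc.2 hc.1⟩
    exact (hT.symm ▸ ha : a ∈ S ∩ Set.Iic u).2
  · intro h T hTS hne hcl
    set t := (hfin.subset hTS).toFinset
    have hmem : ∀ a ∈ S, a ≤ t.sup id → a ∈ T := fun a ha hau => by
      have := maxJI_inter_Iic_finset_sup (s := t) (by simpa [t] using hTS.trans hS)
      simpa [t] using this.subset ⟨hS ha, hau⟩
    have hle : ∀ a ∈ T, a ≤ t.sup id := fun a ha => Finset.le_sup (f := id) (by simpa [t] using ha)
    obtain ⟨a, ha⟩ := hne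
    refine hTS.antisymm fun b hb => hmem b hb (h _ ⟨a, hTS ha, hle a ha⟩ ?_ hb)
    exact fun c hc hcu d hd hcd => hle d (hcl c (hmem c hc hcu) ⟨hcd, hd⟩)

theorem isCyclicElem_iff_exists_cycleGraph_embedding {x : α} :
    IsCyclicElem x ↔ IsLUB (maxJI α ∩ Set.Iic x) x ∧
      ∃ m, ∃ f : SimpleGraph.cycleGraph (m + 3) ↪g commonJIGraph α,
        Set.range f = maxJI α ∩ Set.Iic x := by
  constructor
  · rintro ⟨n, hn, a, ha, hmax, rfl, hcyc⟩
    obtain ⟨m, rfl⟩ : ∃ m, n = m + 3 := ⟨n - 3, by omega⟩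
    have hadj := SimpleGraph.adj_iff_of_forall_lt (G := commonJIGraph α) (f := a)
      (H := SimpleGraph.cycleGraph (m + 3)) fun i j hij => by
        rw [commonJIGraph_adj_iff (ha.ne hij.ne), hcyc i j hij,
          SimpleGraph.cycleGraph_adj_iff_of_lt hij]
    have hrange : Set.range a = maxJI α ∩ Set.Iic (Finset.univ.sup a) := by
      ext b
      constructor
      · rintro ⟨i, rfl⟩
        exact ⟨hmax i, Finset.le_sup (Finset.mem_univ i)⟩
      · rintro ⟨hb, hba⟩
        obtain ⟨i, -, rfl⟩ := exists_eq_of_maxJI_le_finset_sup hb (fun i _ => hmax i) hba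
        exact ⟨i, rfl⟩
    refine ⟨hrange ▸ ?_, m, { toFun := a, inj' := ha, map_rel_iff' := hadj _ _ }, hrange⟩
    simpa using Finset.isLUB_sup (s := Finset.univ) (f := a)
  · rintro ⟨hlub, m, f, hf⟩
    have hmax : ∀ i, f i ∈ maxJI α := fun i => (hf.subset (Set.mem_range_self i)).1
    refine ⟨m + 3, by omega, f, f.injective, hmax, hlub.unique ?_, fun i j hij => ?_⟩
    · simpa [hf] using Finset.isLUB_sup (s := Finset.univ) (f := f)
    · rw [← commonJIGraph_adj_iff (f.injective.ne hij.ne), f.map_adj_iff,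
        SimpleGraph.cycleGraph_adj_iff_of_lt hij]

theorem isCyclicElem_iff [Finite α] {x : α} :
    IsCyclicElem x ↔ IsLUB (maxJI α ∩ Set.Iic x) x ∧ (maxJI α ∩ Set.Iic x).Nonempty ∧
      (∀ a ∈ maxJI α ∩ Set.Iic x,
        ((commonJIGraph α).neighborSet a ∩ (maxJI α ∩ Set.Iic x)).ncard = 2) ∧
      ∀ u, (∃ a ∈ maxJI α ∩ Set.Iic x, a ≤ u) →
        (∀ a ∈ maxJI α ∩ Set.Iic x, a ≤ u → ∀ b ∈ maxJI α ∩ Set.Iic x,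
          (commonJIGraph α).Adj a b → b ≤ u) →
        u ∈ upperBounds (maxJI α ∩ Set.Iic x) := by
  rw [isCyclicElem_iff_exists_cycleGraph_embedding,
    SimpleGraph.exists_cycleGraph_embedding_iff (Set.toFinite _),
    forall_closed_subset_iff_forall_le _ Set.inter_subset_left (Set.toFinite _)]

end Distrib

section Formulas

open Language BoundedFormula

-- In a formula with free variables `Fin n`, a quantifier binds `Fin.last n` and the variables
-- already present are lifted by `Fin.castSucc`.

variable {n : ℕ}

def isBotFormula (i : Fin n) : Language.order.BoundedFormula Empty n :=
  ∀' (&i.castSucc).le &(Fin.last n)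

def isSupFormula (k i j : Fin n) : Language.order.BoundedFormula Empty n :=
  (&i).le &k ⊓ (&j).le &k ⊓
    ∀' ((&i.castSucc).le &(Fin.last n) ⊓ (&j.castSucc).le &(Fin.last n) ⟹
      (&k.castSucc).le &(Fin.last n))

def joinIrredFormula (i : Fin n) : Language.order.BoundedFormula Empty n :=
  ∼(isBotFormula i) ⊓
    ∀' ∀' (isSupFormula i.castSucc.castSucc (Fin.last n).castSucc (Fin.last (n + 1)) ⟹
      (&i.castSucc.castSucc =' &(Fin.last n).castSucc ⊔
        &i.castSucc.castSucc =' &(Fin.last (n + 1))))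

def maxJIFormula (i : Fin n) : Language.order.BoundedFormula Empty n :=
  joinIrredFormula i ⊓
    ∀' (joinIrredFormula (Fin.last n) ⊓ (&i.castSucc).le &(Fin.last n) ⟹
      &i.castSucc =' &(Fin.last n))

def memMaxJIIicFormula (x a : Fin n) : Language.order.BoundedFormula Empty n :=
  maxJIFormula a ⊓ (&a).le &x

def commonJIAdjFormula (a b : Fin n) : Language.order.BoundedFormula Empty n :=
  ∼(&a =' &b) ⊓
    ∃' (joinIrredFormula (Fin.last n) ⊓ (&(Fin.last n)).le &a.castSucc ⊓
      (&(Fin.last n)).le &b.castSucc)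

def upperBoundsFormula (x u : Fin n) : Language.order.BoundedFormula Empty n :=
  ∀' (memMaxJIIicFormula x.castSucc (Fin.last n) ⟹ (&(Fin.last n)).le &u.castSucc)

def isLUBFormula (x : Fin n) : Language.order.BoundedFormula Empty n :=
  ∀' (upperBoundsFormula x.castSucc (Fin.last n) ⟹ (&x.castSucc).le &(Fin.last n))

def neighborsSingletonFormula (x a : Fin n) : Language.order.BoundedFormula Empty n :=
  ∃' ∀' (commonJIAdjFormula a.castSucc.castSucc (Fin.last (n + 1)) ⊓
      memMaxJIIicFormula x.castSucc.castSucc (Fin.last (n + 1)) ⇔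
    &(Fin.last (n + 1)) =' &(Fin.last n).castSucc)

def neighborsPairFormula (x a : Fin n) : Language.order.BoundedFormula Empty n :=
  ∃' ∃' (∼(&(Fin.last n).castSucc =' &(Fin.last (n + 1))) ⊓
    ∀' (commonJIAdjFormula a.castSucc.castSucc.castSucc (Fin.last (n + 2)) ⊓
        memMaxJIIicFormula x.castSucc.castSucc.castSucc (Fin.last (n + 2)) ⇔
      (&(Fin.last (n + 2)) =' &(Fin.last n).castSucc.castSucc ⊔
        &(Fin.last (n + 2)) =' &(Fin.last (n + 1)).castSucc)))

def isVWElemFormula (y : Fin n) : Language.order.BoundedFormula Empty n :=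
  ∼(isBotFormula y) ⊓ isLUBFormula y ⊓
    ∀' (memMaxJIIicFormula y.castSucc (Fin.last n) ⟹
      neighborsSingletonFormula y.castSucc (Fin.last n))

def connectedFormula (x : Fin n) : Language.order.BoundedFormula Empty n :=
  ∀' ((∃' (memMaxJIIicFormula x.castSucc.castSucc (Fin.last (n + 1)) ⊓
        (&(Fin.last (n + 1))).le &(Fin.last n).castSucc)) ⟹
    (∀' (memMaxJIIicFormula x.castSucc.castSucc (Fin.last (n + 1)) ⟹
      (&(Fin.last (n + 1))).le &(Fin.last n).castSucc ⟹
      ∀' (memMaxJIIicFormula x.castSucc.castSucc.castSucc (Fin.last (n + 2)) ⟹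
        commonJIAdjFormula (Fin.last (n + 1)).castSucc (Fin.last (n + 2)) ⟹
        (&(Fin.last (n + 2))).le &(Fin.last n).castSucc.castSucc))) ⟹
    upperBoundsFormula x.castSucc (Fin.last n))

def isCyclicElemFormula (x : Fin n) : Language.order.BoundedFormula Empty n :=
  isLUBFormula x ⊓ ∃' (memMaxJIIicFormula x.castSucc (Fin.last n)) ⊓
    ∀' (memMaxJIIicFormula x.castSucc (Fin.last n) ⟹
      neighborsPairFormula x.castSucc (Fin.last n)) ⊓
    connectedFormula x

def decomposableCyclicElementsSentence : Language.order.Sentence :=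
  ∀' (isCyclicElemFormula 0 ⟹ ∃' ∃' (isVWElemFormula 1 ⊓ isVWElemFormula 2 ⊓
    isSupFormula 0 1 2 ⊓ ∀' ∼(memMaxJIIicFormula 1 3 ⊓ (&3).le &2)))

variable {M : Type*} [Lattice M] [Language.order.Structure M]
  [Language.order.OrderedStructure M] (v : Empty → M) (xs : Fin n → M)

@[simp] lemma realize_le_var (i j : Fin n) :
    ((&i).le &j : Language.order.BoundedFormula Empty n).Realize v xs ↔ xs i ≤ xs j := by
  simp

@[simp] lemma realize_isSupFormula (k i j : Fin n) :
    (isSupFormula k i j).Realize v xs ↔ xs k = xs i ⊔ xs j := by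
  simp only [isSupFormula, realize_inf, realize_imp, realize_all, realize_le_var,
    Fin.snoc_castSucc, Fin.snoc_last]
  exact ⟨fun ⟨⟨hi, hj⟩, h⟩ => le_antisymm (h _ ⟨le_sup_left, le_sup_right⟩) (sup_le hi hj),
    fun h => h ▸ ⟨⟨le_sup_left, le_sup_right⟩, fun _ hu => sup_le hu.1 hu.2⟩⟩

variable [OrderBot M]

@[simp] lemma realize_isBotFormula (i : Fin n) : (isBotFormula i).Realize v xs ↔ xs i = ⊥ := by
  simp only [isBotFormula, realize_all, realize_le_var, Fin.snoc_castSucc, Fin.snoc_last]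
  exact ⟨fun h => le_bot_iff.mp (h ⊥), fun h b => h ▸ bot_le⟩

@[simp] lemma realize_joinIrredFormula (i : Fin n) :
    (joinIrredFormula i).Realize v xs ↔ JoinIrred (xs i) := by
  simp [joinIrredFormula, JoinIrred]

@[simp] lemma realize_maxJIFormula (i : Fin n) :
    (maxJIFormula i).Realize v xs ↔ xs i ∈ maxJI M := by
  simp [maxJIFormula, maxJI]

@[simp] lemma realize_memMaxJIIicFormula (x a : Fin n) :
    (memMaxJIIicFormula x a).Realize v xs ↔ xs a ∈ maxJI M ∩ Set.Iic (xs x) := by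
  simp [memMaxJIIicFormula]

@[simp] lemma realize_commonJIAdjFormula (a b : Fin n) :
    (commonJIAdjFormula a b).Realize v xs ↔ (commonJIGraph M).Adj (xs a) (xs b) := by
  simp [commonJIAdjFormula, commonJIGraph, and_assoc]

@[simp] lemma realize_upperBoundsFormula (x u : Fin n) :
    (upperBoundsFormula x u).Realize v xs ↔ xs u ∈ upperBounds (maxJI M ∩ Set.Iic (xs x)) := by
  simp [upperBoundsFormula, upperBounds]

@[simp] lemma realize_isLUBFormula (x : Fin n) :
    (isLUBFormula x).Realize v xs ↔ IsLUB (maxJI M ∩ Set.Iic (xs x)) (xs x) := by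
  simp only [isLUBFormula, realize_all, realize_imp, realize_upperBoundsFormula, realize_le_var,
    Fin.snoc_castSucc, Fin.snoc_last]
  exact ⟨fun h => ⟨fun _ ha => ha.2, h⟩, fun h => h.2⟩

@[simp] lemma realize_neighborsSingletonFormula (x a : Fin n) :
    (neighborsSingletonFormula x a).Realize v xs ↔
      ((commonJIGraph M).neighborSet (xs a) ∩ (maxJI M ∩ Set.Iic (xs x))).ncard = 1 := by
  simp [neighborsSingletonFormula, Set.ncard_eq_one, Set.ext_iff]

@[simp] lemma realize_neighborsPairFormula (x a : Fin n) :
    (neighborsPairFormula x a).Realize v xs ↔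
      ((commonJIGraph M).neighborSet (xs a) ∩ (maxJI M ∩ Set.Iic (xs x))).ncard = 2 := by
  simp [neighborsPairFormula, Set.ncard_eq_two, Set.ext_iff]

@[simp] lemma realize_isVWElemFormula (y : Fin n) :
    (isVWElemFormula y).Realize v xs ↔ IsVWElem (xs y) := by
  simp [isVWElemFormula, isVWElem_iff, and_assoc]

@[simp] lemma realize_connectedFormula (x : Fin n) :
    (connectedFormula x).Realize v xs ↔
      ∀ u, (∃ a ∈ maxJI M ∩ Set.Iic (xs x), a ≤ u) →
        (∀ a ∈ maxJI M ∩ Set.Iic (xs x), a ≤ u → ∀ b ∈ maxJI M ∩ Set.Iic (xs x),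
          (commonJIGraph M).Adj a b → b ≤ u) →
        u ∈ upperBounds (maxJI M ∩ Set.Iic (xs x)) := by
  simp [connectedFormula]

end Formulas

section

open Language BoundedFormula

variable {M : Type*} [DistribLattice M] [OrderBot M] [Finite M] [Language.order.Structure M]
  [Language.order.OrderedStructure M]

@[simp] lemma realize_isCyclicElemFormula {n : ℕ} (v : Empty → M) (xs : Fin n → M) (x : Fin n) :
    (isCyclicElemFormula x).Realize v xs ↔ IsCyclicElem (xs x) := by
  simp [isCyclicElemFormula, isCyclicElem_iff, Set.Nonempty, and_assoc]

lemma realize_decomposableCyclicElementsSentence :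
    M ⊨ decomposableCyclicElementsSentence ↔ DecomposableCyclicElements M := by
  simp [decomposableCyclicElementsSentence, Sentence.Realize, Formula.Realize,
    DecomposableCyclicElements, Set.eq_empty_iff_forall_notMem, Fin.snoc, and_assoc]

end

/-- There is a first-order sentence in the language with a single binary relation symbol `≤`
such that a finite distributive lattice satisfying the Two-cover Property (viewed as a
structure via its lattice order) satisfies the sentence exactly when it satisfies the
Decomposable Cyclic Elements Property. -/
theorem decomposableCyclicElements_first_order_expressible :
    ∃ φ : Language.order.Sentence,
      ∀ (D : Type) [DistribLattice D] [OrderBot D] [Fintype D],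
        TwoCoverProperty D →
          (@FirstOrder.Language.Sentence.Realize Language.order D
              (Language.orderStructure D) φ ↔
            DecomposableCyclicElements D) := by
  refine ⟨decomposableCyclicElementsSentence, fun D _ _ _ _ => ?_⟩
  let := Language.orderStructure D
  have : Language.order.OrderedStructure D := ⟨fun _ => Iff.rfl⟩
  exact realize_decomposableCyclicElementsSentence
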